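/- arXiv:1406.0165 — 2 statements merged into one kernel-verified Lean document; each statement's English description precedes it below -/
import Mathlib

section
/- For vectors E, B, ω in R^3 with |ω| = 1, the identity (1/2)(|E|² + |B|²) + ω·(E×B) = (1/4)(|E·ω|² + |B·ω|² + |E − ω×B|² + |B + ω×E|²) holds. In particular the left-hand side is nonnegative. -/
/-!
Expanding the two squared norms on the right, Lagrange's identity
`‖ω × v‖² = ‖v‖² - ⟪v, ω⟫²` (with `‖ω‖ = 1`) cancels the `⟪·, ω⟫²` terms, and the cyclic
symmetry of the triple product turns both cross terms into `⟪ω, E × B⟫`.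
-/

open RealInnerProductSpace

noncomputable def cross3 (a b : EuclideanSpace ℝ (Fin 3)) : EuclideanSpace ℝ (Fin 3) :=
  WithLp.toLp 2 ![a 1 * b 2 - a 2 * b 1, a 2 * b 0 - a 0 * b 2, a 0 * b 1 - a 1 * b 0]

open Matrix

lemma EuclideanSpace.real_inner_eq_dotProduct {ι : Type*} [Fintype ι] (x y : EuclideanSpace ℝ ι) :
    ⟪x, y⟫ = x.ofLp ⬝ᵥ y.ofLp := by
  rw [EuclideanSpace.inner_eq_star_dotProduct, star_trivial, dotProduct_comm]

open EuclideanSpace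

lemma cross3_eq_toLp_crossProduct (a b : EuclideanSpace ℝ (Fin 3)) :
    cross3 a b = WithLp.toLp 2 (a.ofLp ⨯₃ b.ofLp) := by
  rw [cross3, cross_apply]

lemma cross3_anticomm (a b : EuclideanSpace ℝ (Fin 3)) : cross3 b a = -cross3 a b := by
  rw [cross3_eq_toLp_crossProduct, cross3_eq_toLp_crossProduct, ← cross_anticomm]
  rfl

lemma inner_cross3_cyclic (u v w : EuclideanSpace ℝ (Fin 3)) :
    ⟪u, cross3 v w⟫ = ⟪v, cross3 w u⟫ := by
  simp only [cross3_eq_toLp_crossProduct, real_inner_eq_dotProduct]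
  exact triple_product_permutation _ _ _

lemma norm_cross3_sq (a b : EuclideanSpace ℝ (Fin 3)) :
    ‖cross3 a b‖ ^ 2 = ‖a‖ ^ 2 * ‖b‖ ^ 2 - ⟪a, b⟫ ^ 2 := by
  simp only [← real_inner_self_eq_norm_sq, real_inner_eq_dotProduct, cross3_eq_toLp_crossProduct]
  rw [cross_dot_cross, dotProduct_comm b.ofLp a.ofLp]
  ring

theorem stmt6 (E B ω : EuclideanSpace ℝ (Fin 3)) (hω : ‖ω‖ = 1) :
    (1 / 2) * (‖E‖ ^ 2 + ‖B‖ ^ 2) + ⟪ω, cross3 E B⟫ =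
      (1 / 4) * (⟪E, ω⟫ ^ 2 + ⟪B, ω⟫ ^ 2 + ‖E - cross3 ω B‖ ^ 2 + ‖B + cross3 ω E‖ ^ 2) ∧
    0 ≤ (1 / 2) * (‖E‖ ^ 2 + ‖B‖ ^ 2) + ⟪ω, cross3 E B⟫ := by
  have hE : ⟪E, cross3 ω B⟫ = -⟪ω, cross3 E B⟫ := by
    rw [inner_cross3_cyclic, cross3_anticomm, inner_neg_right]
  have hB : ⟪B, cross3 ω E⟫ = ⟪ω, cross3 E B⟫ := by
    rw [inner_cross3_cyclic, inner_cross3_cyclic]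
  have key : (1 / 2) * (‖E‖ ^ 2 + ‖B‖ ^ 2) + ⟪ω, cross3 E B⟫ =
      (1 / 4) * (⟪E, ω⟫ ^ 2 + ⟪B, ω⟫ ^ 2 + ‖E - cross3 ω B‖ ^ 2 + ‖B + cross3 ω E‖ ^ 2) := by
    rw [norm_sub_sq_real, norm_add_sq_real, norm_cross3_sq, norm_cross3_sq, hω, hE, hB,
      real_inner_comm ω B, real_inner_comm ω E]
    ring
  refine ⟨key, ?_⟩
  rw [key]
  positivity
end

section
/- There exists a constant C such that for vectors E, B in R^3, a unit vector ω in R^3, and p̂ = p/√(1+|p|²) for some p in R^3, the Lorentz force satisfies |E + p̂×B| ≤ C(|E·ω| + |B·ω| + |B + ω×E| + (1 + p̂·ω)^{1/2}|B|). -/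
open RealInnerProductSpace

/-!
For a unit vector `ω` one has `ω × (ω × E) = (E·ω) ω - E`, hence the decomposition
`E + p̂ × B = (E·ω) ω - ω × (B + ω × E) + (ω + p̂) × B`.
Since `‖p̂‖ ≤ 1`, `‖ω + p̂‖² = 1 + 2 p̂·ω + ‖p̂‖² ≤ 2 (1 + p̂·ω)`, and the triangle inequality
together with `‖u × v‖ ≤ ‖u‖ ‖v‖` gives the bound with `C = 2`.
-/

open WithLp Matrix

section Cross3

variable (a b c : EuclideanSpace ℝ (Fin 3))

lemma cross3_eq_toLp_crossProduct_s8 : cross3 a b = toLp 2 (ofLp a ⨯₃ ofLp b) := by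
  simp [cross3, cross_apply]

lemma cross3_add_left : cross3 (a + b) c = cross3 a c + cross3 b c := by
  simp only [cross3_eq_toLp_crossProduct_s8, ofLp_add, map_add, LinearMap.add_apply, toLp_add]

lemma cross3_add_right : cross3 a (b + c) = cross3 a b + cross3 a c := by
  simp only [cross3_eq_toLp_crossProduct_s8, ofLp_add, map_add, toLp_add]

lemma cross3_cross3_self : cross3 a (cross3 a b) = ⟪b, a⟫ • a - ‖a‖ ^ 2 • b := by
  rw [cross3_eq_toLp_crossProduct_s8, cross3_eq_toLp_crossProduct_s8, ofLp_toLp,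
    cross_cross_eq_smul_sub_smul', ← real_inner_self_eq_norm_sq,
    EuclideanSpace.inner_eq_star_dotProduct, EuclideanSpace.inner_eq_star_dotProduct]
  simp

lemma norm_cross3_le : ‖cross3 a b‖ ≤ ‖a‖ * ‖b‖ := by
  rw [cross3_eq_toLp_crossProduct_s8, InnerProductGeometry.norm_ofLp_crossProduct]
  exact mul_le_of_le_one_right (by positivity) (Real.sin_le_one _)

end Cross3

lemma add_cross3_eq_decomposition (E B ω q : EuclideanSpace ℝ (Fin 3)) (hω : ‖ω‖ = 1) :
    E + cross3 q B = ⟪E, ω⟫ • ω - cross3 ω (B + cross3 ω E) + cross3 (ω + q) B := by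
  rw [cross3_add_right, cross3_cross3_self, cross3_add_left, hω]
  module

lemma norm_add_cross3_le (E B ω q : EuclideanSpace ℝ (Fin 3)) (hω : ‖ω‖ = 1) :
    ‖E + cross3 q B‖ ≤ |⟪E, ω⟫| + ‖B + cross3 ω E‖ + ‖ω + q‖ * ‖B‖ := by
  rw [add_cross3_eq_decomposition E B ω q hω]
  calc _ ≤ ‖⟪E, ω⟫ • ω‖ + ‖cross3 ω (B + cross3 ω E)‖ + ‖cross3 (ω + q) B‖ :=
        (norm_add_le _ _).trans (by gcongr; exact norm_sub_le _ _)
    _ ≤ |⟪E, ω⟫| + ‖B + cross3 ω E‖ + ‖ω + q‖ * ‖B‖ := by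
      gcongr
      · rw [norm_smul, hω, mul_one, Real.norm_eq_abs]
      · exact (norm_cross3_le _ _).trans_eq (by rw [hω, one_mul])
      · exact norm_cross3_le _ _

section InnerProductSpace

variable {F : Type*} [NormedAddCommGroup F] [InnerProductSpace ℝ F]

lemma norm_add_le_sqrt_two_mul_sqrt_one_add_inner {ω q : F} (hω : ‖ω‖ = 1) (hq : ‖q‖ ≤ 1) :
    ‖ω + q‖ ≤ √2 * √(1 + ⟪q, ω⟫) := by
  rw [← Real.sqrt_mul zero_le_two, ← Real.sqrt_sq (norm_nonneg (ω + q))]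
  refine Real.sqrt_le_sqrt ?_
  rw [norm_add_sq_real, hω, real_inner_comm]
  nlinarith [norm_nonneg q]

end InnerProductSpace

lemma norm_inv_sqrt_one_add_sq_smul_le_one {F : Type*} [NormedAddCommGroup F] [NormedSpace ℝ F]
    (p : F) : ‖(√(1 + ‖p‖ ^ 2))⁻¹ • p‖ ≤ 1 := by
  rw [norm_smul, norm_inv, Real.norm_of_nonneg (Real.sqrt_nonneg _),
    inv_mul_le_one₀ (Real.sqrt_pos.2 (by positivity))]
  exact Real.le_sqrt_of_sq_le (by linarith)

theorem stmt8 :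
    ∃ C > 0, ∀ (E B ω p : EuclideanSpace ℝ (Fin 3)), ‖ω‖ = 1 →
      ∀ phat : EuclideanSpace ℝ (Fin 3), phat = (Real.sqrt (1 + ‖p‖ ^ 2))⁻¹ • p →
        ‖E + cross3 phat B‖ ≤
          C * (|⟪E, ω⟫| + |⟪B, ω⟫| + ‖B + cross3 ω E‖ +
            Real.sqrt (1 + ⟪phat, ω⟫) * ‖B‖) := by
  refine ⟨2, two_pos, fun E B ω p hω phat hphat => ?_⟩
  have hphat_le : ‖phat‖ ≤ 1 := hphat ▸ norm_inv_sqrt_one_add_sq_smul_le_one p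
  have hsqrt_two : √2 ≤ 2 := Real.sqrt_le_iff.2 ⟨zero_le_two, by norm_num⟩
  have hsum : ‖ω + phat‖ ≤ 2 * √(1 + ⟪phat, ω⟫) :=
    (norm_add_le_sqrt_two_mul_sqrt_one_add_inner hω hphat_le).trans (by gcongr)
  calc ‖E + cross3 phat B‖ ≤ |⟪E, ω⟫| + ‖B + cross3 ω E‖ + ‖ω + phat‖ * ‖B‖ :=
        norm_add_cross3_le E B ω phat hω
    _ ≤ |⟪E, ω⟫| + ‖B + cross3 ω E‖ + 2 * √(1 + ⟪phat, ω⟫) * ‖B‖ := by gcongr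
    _ ≤ 2 * (|⟪E, ω⟫| + |⟪B, ω⟫| + ‖B + cross3 ω E‖ + √(1 + ⟪phat, ω⟫) * ‖B‖) := by
      linarith [abs_nonneg ⟪E, ω⟫, abs_nonneg ⟪B, ω⟫, norm_nonneg (B + cross3 ω E)]
end
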